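/- Let N, M and l be positive integers with M² | N and l ≡ 1 (mod M), and let σ ∈ SL₂(ℤ) be a matrix whose lower-left entry c satisfies gcd(c, N) = N/M. Then σ · Δ(l,N;M) · σ⁻¹ = Δ(l,N;M). -/

import Mathlib

open scoped MatrixGroups

/-- `Δ(l,N;M)`: integer matrices `(a b; c d)` with `c ≡ 0 (mod N)`,
`a ≡ 1 (mod M)`, and determinant `l`. -/
def DeltaSet (l N M : ℕ) : Set (Matrix (Fin 2) (Fin 2) ℤ) :=
  {γ | (N : ℤ) ∣ γ 1 0 ∧ γ 0 0 ≡ 1 [ZMOD (M : ℤ)] ∧ γ.det = (l : ℤ)}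

lemma conj_mem (N M l : ℕ) (hM : 0 < M) (hMN : M ^ 2 ∣ N) (hlM : l % M = 1 % M)
    (S : Matrix (Fin 2) (Fin 2) ℤ) (hdet : S.det = 1)
    (hr : ((N / M : ℕ) : ℤ) ∣ S 1 0)
    (γ : Matrix (Fin 2) (Fin 2) ℤ) (hγ : γ ∈ DeltaSet l N M) :
    S * γ * S.adjugate ∈ DeltaSet l N M := by
  obtain ⟨hc, ha, hdγ⟩ := hγ
  set p := S 0 0; set q := S 0 1; set r := S 1 0; set s := S 1 1
  set a := γ 0 0; set b := γ 0 1; set c := γ 1 0; set d := γ 1 1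
  have hdetS : p * s - q * r = 1 := by
    rw [Matrix.det_fin_two] at hdet; exact hdet
  have hdetγ : a * d - b * c = (l : ℤ) := by
    rw [Matrix.det_fin_two] at hdγ; exact hdγ
  have hMdvdN : M ∣ N := dvd_trans (dvd_pow_self M two_ne_zero) hMN
  set m : ℤ := (M : ℤ) with hm_def
  set n : ℤ := (N : ℤ) with hn_def
  set k : ℤ := ((N / M : ℕ) : ℤ) with hk_def
  have hkm : k * m = n := by
    rw [hk_def, hm_def, hn_def]
    exact_mod_cast Nat.div_mul_cancel hMdvdN
  have hmk : m ∣ k := by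
    have h1 : M ∣ N / M := by
      rcases hMN with ⟨t, ht⟩
      exact ⟨t, by rw [ht, pow_two, mul_assoc, Nat.mul_div_cancel_left _ hM]⟩
    rw [hk_def, hm_def]
    exact_mod_cast h1
  have ha1 : m ∣ a - 1 := Int.ModEq.dvd ha.symm
  have hmn : m ∣ n := by rw [hm_def, hn_def]; exact_mod_cast hMdvdN
  have hmc : m ∣ c := hmn.trans hc
  have hml : m ∣ (l : ℤ) - 1 := by
    have h2 : (l : ℤ) ≡ 1 [ZMOD m] := by
      have := congrArg (Nat.cast : ℕ → ℤ) hlM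
      push_cast at this
      simpa [Int.ModEq] using this
    exact h2.symm.dvd
  have hd1 : m ∣ d - 1 := by
    have key : d - 1 = ((l:ℤ) - 1) + b * c - (a - 1) * d + (a * d - b * c - l) := by ring
    rw [key, hdetγ, sub_self, add_zero]
    exact dvd_sub (dvd_add hml (hmc.mul_left b)) (ha1.mul_right d)
  have had : m ∣ a - d := by
    have h3 : a - d = (a - 1) - (d - 1) := by ring
    rw [h3]; exact dvd_sub ha1 hd1
  have hmr : m ∣ r := hmk.trans hr
  refine ⟨?_, ?_, ?_⟩
  · -- N ∣ lower left entry
    have he : (S * γ * S.adjugate) 1 0 = r * (a - d) * s + s * s * c - (r * r) * b := by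
      simp [Matrix.adjugate_fin_two, Matrix.mul_apply, Fin.sum_univ_two]
      ring
    have hn' : (N : ℤ) = k * m := hkm.symm
    rw [he, hn']
    refine dvd_sub (dvd_add ?_ ?_) ?_
    · exact Dvd.dvd.mul_right (mul_dvd_mul hr had) s
    · exact Dvd.dvd.mul_left (hn' ▸ hc) (s * s)
    · exact Dvd.dvd.mul_right (mul_dvd_mul hr (hmk.trans hr)) b
  · -- upper left ≡ 1 mod M
    have he : (S * γ * S.adjugate) 0 0 - 1 =
        p * s * (a - 1) + q * s * c - p * b * r - q * r * (d - 1)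
          + (p * s - q * r - 1) := by
      simp [Matrix.adjugate_fin_two, Matrix.mul_apply, Fin.sum_univ_two]
      ring
    have h4 : m ∣ (S * γ * S.adjugate) 0 0 - 1 := by
      rw [he, hdetS, sub_self, add_zero]
      exact dvd_sub (dvd_sub (dvd_add (ha1.mul_left _) (hmc.mul_left _))
        (hmr.mul_left (p * b))) (hd1.mul_left _)
    exact (Int.modEq_iff_dvd.mpr h4).symm
  · rw [Matrix.det_mul, Matrix.det_mul, Matrix.det_adjugate, hdet, hdγ]
    simp

theorem stmt_19 (N M l : ℕ) (hN : 0 < N) (hM : 0 < M) (hl : 0 < l)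
    (hMN : M ^ 2 ∣ N) (hlM : l % M = 1 % M)
    (σ : SL(2, ℤ))
    (hσ : Int.gcd ((σ : Matrix (Fin 2) (Fin 2) ℤ) 1 0) N = N / M) :
    (fun γ => (σ : Matrix (Fin 2) (Fin 2) ℤ) * γ *
        ((σ⁻¹ : SL(2, ℤ)) : Matrix (Fin 2) (Fin 2) ℤ)) '' DeltaSet l N M =
      DeltaSet l N M := by
  set S : Matrix (Fin 2) (Fin 2) ℤ := (σ : Matrix (Fin 2) (Fin 2) ℤ) with hS
  have hcoeinv : ((σ⁻¹ : SL(2, ℤ)) : Matrix (Fin 2) (Fin 2) ℤ) = S.adjugate :=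
    Matrix.SpecialLinearGroup.coe_inv σ
  have hdetS : S.det = 1 := σ.2
  have hrS : ((N / M : ℕ) : ℤ) ∣ S 1 0 := by
    rw [← hσ]; exact Int.gcd_dvd_left _ _
  have hmul : S * S.adjugate = 1 := by rw [Matrix.mul_adjugate, hdetS, one_smul]
  have hmul' : S.adjugate * S = 1 := by rw [Matrix.adjugate_mul, hdetS, one_smul]
  ext γ
  constructor
  · rintro ⟨δ, hδ, rfl⟩
    simp only [hcoeinv]
    exact conj_mem N M l hM hMN hlM S hdetS hrS δ hδ
  · intro hγ
    refine ⟨S.adjugate * γ * S, ?_, ?_⟩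
    · have hdetA : S.adjugate.det = 1 := by
        rw [Matrix.det_adjugate, hdetS, one_pow]
      have hadjadj : S.adjugate.adjugate = S := by
        calc S.adjugate.adjugate
            = S.adjugate.adjugate * (S.adjugate * S) := by rw [hmul', mul_one]
          _ = (S.adjugate.adjugate * S.adjugate) * S := by rw [mul_assoc]
          _ = S := by rw [Matrix.adjugate_mul, hdetA, one_smul, one_mul]
      have hrA : ((N / M : ℕ) : ℤ) ∣ S.adjugate 1 0 := by
        rw [Matrix.adjugate_fin_two]
        simpa using hrS.neg_right
      have := conj_mem N M l hM hMN hlM S.adjugate hdetA hrA γ hγ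
      rwa [hadjadj] at this
    · simp only [hcoeinv]
      calc S * (S.adjugate * γ * S) * S.adjugate
          = (S * S.adjugate) * γ * (S * S.adjugate) := by noncomm_ring
        _ = γ := by rw [hmul, one_mul, mul_one]
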